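/- arXiv:2512.12645 — 7 statements merged into one kernel-verified Lean document; each statement's English description precedes it below -/
import Mathlib

section
/- Let G be a finite group with identity e, and let U_{0→i} = SWAP_{0,i} ∘ W_i with W_i = ∑_{g∈G} |g⟩⟨g|_i ⊗ 1_0 ⊗ ⊗_{k∈R} U_R(g)_k be the finite-group frame-change unitary. Then for all g_i ∈ G and all tuples (g_k)_{k∈R} in G, U_{0→i}( |e⟩_0 ⊗ |g_i⟩_i ⊗ ⊗_{k∈R} |g_k⟩_k ) = |g_i⟩_0 ⊗ |e⟩_i ⊗ ⊗_{k∈R} |g_k g_i⁻¹⟩_k; that is, the new frame is fixed at the identity, the old frame register records g_i, and every non-reference system is right-multiplied by g_i⁻¹. -/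
open Matrix Finset

/-- The right-regular representation of a finite group `G` on `ℂ^G`:
`U_R(h)|g⟩ = |g h⁻¹⟩`. -/
def rightReg {G : Type*} [Group G] [Fintype G] [DecidableEq G] (h : G) :
    Matrix G G ℂ :=
  Matrix.of fun a b => if a = b * h⁻¹ then 1 else 0

/-- The rank-one projector `|g⟩⟨g|` on `ℂ^G`. -/
def ketbra {G : Type*} [Group G] [Fintype G] [DecidableEq G] (g : G) :
    Matrix G G ℂ :=
  Matrix.of fun a b => if a = g ∧ b = g then 1 else 0

/-- Tensor product of an operator on the factor `0`, an operator on the factor `i`,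
and an operator on the remaining registers `⊗_{k∈R} H_k`, as a matrix on
`H = H_0 ⊗ H_i ⊗ ⊗_{k∈R} H_k` indexed by `G × G × (R → G)`. -/
def tens3 {G : Type*} [Group G] [Fintype G] [DecidableEq G]
    {R : Type*} [Fintype R] [DecidableEq R]
    (P Q : Matrix G G ℂ) (T : Matrix (R → G) (R → G) ℂ) :
    Matrix (G × G × (R → G)) (G × G × (R → G)) ℂ :=
  Matrix.of fun a b => P a.1 b.1 * Q a.2.1 b.2.1 * T a.2.2 b.2.2

/-- The tensor product `⊗_{k∈R} M k` of one-site operators, as a matrix on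
`⊗_{k∈R} H_k` indexed by `R → G`. -/
def prodMat {G : Type*} [Group G] [Fintype G] [DecidableEq G]
    {R : Type*} [Fintype R] [DecidableEq R]
    (M : R → Matrix G G ℂ) : Matrix (R → G) (R → G) ℂ :=
  Matrix.of fun f f' => ∏ k : R, M k (f k) (f' k)

/-- The controlled part `W_i = ∑_{g∈G} |g⟩⟨g|_i ⊗ 1_0 ⊗ ⊗_{k∈R} U_R(g)_k`
of the finite-group frame-change unitary. -/
noncomputable def Wmap (G : Type*) [Group G] [Fintype G] [DecidableEq G]
    (R : Type*) [Fintype R] [DecidableEq R] :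
    Matrix (G × G × (R → G)) (G × G × (R → G)) ℂ :=
  ∑ g : G, tens3 (1 : Matrix G G ℂ) (ketbra g) (prodMat fun _ : R => rightReg g)

/-- `SWAP_{0,i}`: exchange of the tensor factors `0` and `i`. -/
def swap0i (G : Type*) [Group G] [Fintype G] [DecidableEq G]
    (R : Type*) [Fintype R] [DecidableEq R] :
    Matrix (G × G × (R → G)) (G × G × (R → G)) ℂ :=
  Matrix.of fun a b => if a.1 = b.2.1 ∧ a.2.1 = b.1 ∧ a.2.2 = b.2.2 then 1 else 0

/-- The frame-change operator `U_{0→i} = SWAP_{0,i} ∘ W_i`. -/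
noncomputable def frameChange (G : Type*) [Group G] [Fintype G] [DecidableEq G]
    (R : Type*) [Fintype R] [DecidableEq R] :
    Matrix (G × G × (R → G)) (G × G × (R → G)) ℂ :=
  swap0i G R * Wmap G R


/-- The computational basis vector `|x⟩` of `H`, for `x = (g_0, g_i, (g_k)_{k∈R})`. -/
def basisVec {G : Type*} [Group G] [Fintype G] [DecidableEq G]
    {R : Type*} [Fintype R] [DecidableEq R]
    (x : G × G × (R → G)) : (G × G × (R → G)) → ℂ :=
  fun y => if y = x then 1 else 0

/-- the frame-change unitary acts on relational basis states by
`U_{0→i}(|e⟩_0 ⊗ |g_i⟩_i ⊗ ⊗_k |g_k⟩_k) = |g_i⟩_0 ⊗ |e⟩_i ⊗ ⊗_k |g_k g_i⁻¹⟩_k`. -/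
theorem frameChange_apply_basis
    (G : Type*) [Group G] [Fintype G] [DecidableEq G]
    (R : Type*) [Fintype R] [DecidableEq R]
    (gi : G) (gk : R → G) :
    (frameChange G R).mulVec (basisVec ((1 : G), gi, gk)) =
      basisVec (gi, (1 : G), fun k => gk k * gi⁻¹) := by
  funext y
  simp only [frameChange, Matrix.mulVec, dotProduct, basisVec, mul_ite, mul_one, mul_zero,
    Finset.sum_ite_eq' (Finset.univ) ((1:G), gi, gk), Finset.mem_univ, if_true]
  rw [Matrix.mul_apply]
  have hW : ∀ z : G × G × (R → G), Wmap G R z (1, gi, gk) =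
      if z = (1, gi, fun k => gk k * gi⁻¹) then 1 else 0 := by
    intro z
    simp only [Wmap, Matrix.sum_apply, tens3, ketbra, prodMat, rightReg, Matrix.of_apply,
      Matrix.one_apply]
    rw [Finset.sum_eq_single gi]
    · by_cases h1 : z.1 = (1:G)
      · by_cases h2 : z.2.1 = gi
        · by_cases h3 : z.2.2 = fun k => gk k * gi⁻¹
          · simp [h1, h2, h3, Prod.ext_iff, funext_iff]
          · obtain ⟨k, hk⟩ := Function.ne_iff.mp h3
            rw [Finset.prod_eq_zero (Finset.mem_univ k) (by simp [hk])]
            simp [Prod.ext_iff, h3]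
          
        · simp [h2, Prod.ext_iff]
      · simp [h1, Prod.ext_iff]
    · intro g _ hg
      simp [hg.symm]
    · simp
  simp only [hW, mul_ite, mul_one, mul_zero, Finset.sum_ite_eq' Finset.univ, Finset.mem_univ,
    if_true]
  simp [swap0i, basisVec, Prod.ext_iff, and_comm]
end

section
/- Let G be a finite group and let U_{0→i} = SWAP_{0,i} ∘ W_i with W_i = ∑_{g∈G} |g⟩⟨g|_i ⊗ 1_0 ⊗ ⊗_{k∈R} U_R(g)_k be the finite-group frame-change unitary on H = H_0 ⊗ H_i ⊗ ⊗_{k∈R} H_k. Let A_S be any linear operator on the factor H_S for some S ∈ R, embedded into H as Ã_S by tensoring with the identity on all other factors. Then U_{0→i} Ã_S U_{0→i}† = ∑_{g∈G} |g⟩⟨g|_0 ⊗ 1_i ⊗ (⊗_{k∈R∖{S}} 1_k) ⊗ ( U_R(g) A_S U_R(g)† )_S. -/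
open Matrix Finset

/-- Embedding of a one-site operator `A` at site `S ∈ R` into `⊗_{k∈R} H_k`
(identity on every other site). -/
def embedAt {G : Type*} [Group G] [Fintype G] [DecidableEq G]
    {R : Type*} [Fintype R] [DecidableEq R]
    (S : R) (A : Matrix G G ℂ) : Matrix (R → G) (R → G) ℂ :=
  prodMat fun k => if k = S then A else 1

lemma Wmap_apply {G : Type*} [Group G] [Fintype G] [DecidableEq G]
    {R : Type*} [Fintype R] [DecidableEq R]
    (a b : G × G × (R → G)) :
    Wmap G R a b =
      if a.1 = b.1 ∧ a.2.1 = b.2.1 ∧ a.2.2 = (fun k => b.2.2 k * a.2.1⁻¹) then 1 else 0 := by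
  classical
  unfold Wmap tens3 ketbra rightReg prodMat
  simp only [Matrix.sum_apply, Matrix.of_apply, Matrix.one_apply, Finset.prod_boole]
  rw [Finset.sum_eq_single a.2.1]
  · by_cases h1 : a.1 = b.1 <;> by_cases h2 : a.2.1 = b.2.1 <;>
      by_cases h3 : a.2.2 = (fun k => b.2.2 k * a.2.1⁻¹) <;>
      simp_all [funext_iff] <;>
      exact fun hc => h2 hc.symm
  · intro g _ hg
    simp [Ne.symm hg]
  · simp

lemma frameChange_apply {G : Type*} [Group G] [Fintype G] [DecidableEq G]
    {R : Type*} [Fintype R] [DecidableEq R]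
    (a c : G × G × (R → G)) :
    frameChange G R a c =
      if c = (a.2.1, a.1, fun k => a.2.2 k * a.1) then 1 else 0 := by
  classical
  unfold frameChange swap0i
  rw [Matrix.mul_apply]
  have : ∀ x : G × G × (R → G),
      (Matrix.of fun a b : G × G × (R → G) =>
        if a.1 = b.2.1 ∧ a.2.1 = b.1 ∧ a.2.2 = b.2.2 then (1:ℂ) else 0) a x
        = if x = (a.2.1, a.1, a.2.2) then 1 else 0 := by
    intro x
    simp only [Matrix.of_apply, Prod.ext_iff]
    by_cases h : x.1 = a.2.1 ∧ x.2.1 = a.1 ∧ x.2.2 = a.2.2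
    · rw [if_pos h, if_pos]
      exact ⟨h.2.1.symm, h.1.symm, h.2.2.symm⟩
    · rw [if_neg h, if_neg]
      exact fun ⟨p, q, r⟩ => h ⟨q.symm, p.symm, r.symm⟩
  simp only [this, ite_mul, one_mul, zero_mul]
  rw [Finset.sum_ite_eq' Finset.univ (a.2.1, a.1, a.2.2)]
  simp only [Finset.mem_univ, if_true, Wmap_apply]
  by_cases h : c = (a.2.1, a.1, fun k => a.2.2 k * a.1)
  · subst h
    simp [funext_iff]
  · rw [if_neg h, if_neg]
    rintro ⟨h1, h2, h3⟩
    apply h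
    refine Prod.ext h1.symm (Prod.ext h2.symm ?_)
    funext k
    have := congrFun h3 k
    show c.2.2 k = a.2.2 k * a.1
    rw [this]
    group

lemma rightReg_mul {G : Type*} [Group G] [Fintype G] [DecidableEq G]
    (g : G) (A : Matrix G G ℂ) (x c : G) :
    (rightReg g * A) x c = A (x * g) c := by
  classical
  rw [Matrix.mul_apply, Finset.sum_eq_single (x * g)]
  · simp [rightReg, mul_assoc]
  · intro b _ hb
    rw [rightReg, Matrix.of_apply, if_neg, zero_mul]
    intro h
    apply hb
    rw [h]; group
  · simp

lemma rightReg_conj {G : Type*} [Group G] [Fintype G] [DecidableEq G]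
    (g : G) (A : Matrix G G ℂ) (x y : G) :
    (rightReg g * A * (rightReg g)ᴴ) x y = A (x * g) (y * g) := by
  classical
  rw [Matrix.mul_apply, Finset.sum_eq_single (y * g)]
  · rw [rightReg_mul]
    simp [rightReg, Matrix.conjTranspose_apply, mul_assoc]
  · intro d _ hd
    have hz : rightReg g y d = 0 := by
      rw [rightReg, Matrix.of_apply, if_neg]
      intro h
      apply hd
      rw [h]; group
    simp [Matrix.conjTranspose_apply, hz]
  · simp

/-- for any linear operator `A_S` on factor `H_S` with `S ∈ R`, embedded
into `H` as `Ã_S`, one has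
`U_{0→i} Ã_S U_{0→i}† = ∑_g |g⟩⟨g|_0 ⊗ 1_i ⊗ (⊗_{k≠S} 1_k) ⊗ (U_R(g) A_S U_R(g)†)_S`. -/
theorem frameChange_conj_local_operator
    (G : Type*) [Group G] [Fintype G] [DecidableEq G]
    (R : Type*) [Fintype R] [DecidableEq R]
    (S : R) (A : Matrix G G ℂ) :
    frameChange G R * tens3 1 1 (embedAt S A) * (frameChange G R)ᴴ =
      ∑ g : G,
        tens3 (ketbra g) 1 (embedAt S (rightReg g * A * (rightReg g)ᴴ)) := by
  classical
  ext a b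
  obtain ⟨a0, ai, f⟩ := a
  obtain ⟨b0, bi, hh⟩ := b
  have h1 : (frameChange G R * tens3 1 1 (embedAt S A) * (frameChange G R)ᴴ)
        (a0, ai, f) (b0, bi, hh)
      = tens3 1 1 (embedAt S A) (ai, a0, fun k => f k * a0) (bi, b0, fun k => hh k * b0) := by
    rw [Matrix.mul_apply,
      Finset.sum_eq_single ((bi, b0, fun k => hh k * b0) : G × G × (R → G))]
    · rw [Matrix.conjTranspose_apply, frameChange_apply, if_pos rfl, star_one, mul_one]
      rw [Matrix.mul_apply,
        Finset.sum_eq_single ((ai, a0, fun k => f k * a0) : G × G × (R → G))]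
      · rw [frameChange_apply, if_pos rfl, one_mul]
      · intro d _ hd
        rw [frameChange_apply, if_neg hd, zero_mul]
      · simp
    · intro d _ hd
      rw [Matrix.conjTranspose_apply, frameChange_apply, if_neg hd, star_zero, mul_zero]
    · simp
  rw [h1, Matrix.sum_apply]
  unfold tens3 ketbra embedAt prodMat
  simp only [Matrix.of_apply]
  by_cases hab : a0 = b0
  · subst hab
    rw [Finset.sum_eq_single a0]
    · rw [if_pos ⟨rfl, rfl⟩, Matrix.one_apply_eq, one_mul]
      have hprod : (∏ k, (if k = S then A else 1) (f k * a0) (hh k * a0))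
          = ∏ k, (if k = S then rightReg a0 * A * (rightReg a0)ᴴ else 1) (f k) (hh k) := by
        refine Finset.prod_congr rfl fun k _ => ?_
        by_cases hk : k = S
        · rw [if_pos hk, if_pos hk, rightReg_conj]
        · rw [if_neg hk, if_neg hk, Matrix.one_apply, Matrix.one_apply]
          by_cases hfk : f k = hh k
          · rw [if_pos (by rw [hfk]), if_pos hfk]
          · rw [if_neg (fun hc => hfk (mul_right_cancel hc)), if_neg hfk]
      rw [hprod]
      ring
    · intro g _ hg
      rw [if_neg, zero_mul, zero_mul]
      rintro ⟨rfl, -⟩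
      exact hg rfl
    · simp
  · rw [show (1 : Matrix G G ℂ) a0 b0 = 0 from Matrix.one_apply_ne hab, mul_zero, zero_mul]
    rw [Finset.sum_eq_zero]
    intro g _
    rw [if_neg, zero_mul, zero_mul]
    rintro ⟨rfl, rfl⟩
    exact hab rfl
end

section
/- Covariant gates acquire only a control phase: Let G be a finite group, U_{0→i} the finite-group frame-change unitary, and U_S a unitary on H_S for some S ∈ R. Suppose there is a group homomorphism χ : G → ℂ with |χ(g)| = 1 for all g, such that U_R(g) U_S U_R(g)† = χ(g) U_S for all g ∈ G. Then U_{0→i} (1 ⊗ U_S) U_{0→i}† = V_0(χ) ⊗ 1_i ⊗ (⊗_{k∈R∖{S}} 1_k) ⊗ U_S, where V_0(χ) = ∑_{g∈G} χ(g) |g⟩⟨g|_0 is a diagonal unitary on the old-frame register; in particular the frame change introduces only a frame-dependent phase and creates no entanglement between the frame register and S. -/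
open Matrix Finset

/-!
`U_{0→i}` permutes the computational basis, `(a₀, aᵢ, f) ↦ (aᵢ, a₀, f · a₀)`, so conjugating
by it merely reindexes matrix entries. The conjugated operator is therefore block diagonal in
the old-frame register `a₀`, and on the block `a₀` it acts on `S` by `U_S` translated on the
right by `a₀`, which covariance identifies with `χ(a₀) U_S`.
-/

namespace Matrix

theorem permMatrix_mul_mul_conjTranspose_permMatrix {n α : Type*} [Fintype n] [DecidableEq n]
    [Semiring α] [StarRing α] (σ : Equiv.Perm n) (M : Matrix n n α) :
    σ.permMatrix α * M * (σ.permMatrix α)ᴴ = M.submatrix σ σ := by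
  rw [conjTranspose_permMatrix, PEquiv.toMatrix_toPEquiv_mul, PEquiv.mul_toMatrix_toPEquiv]
  rfl

theorem diagonal_conjTranspose_mul_self_eq_one {n : Type*} [Fintype n] [DecidableEq n]
    {χ : n → ℂ} (hχ : ∀ g, ‖χ g‖ = 1) :
    (diagonal χ)ᴴ * diagonal χ = 1 ∧ diagonal χ * (diagonal χ)ᴴ = 1 := by
  simp only [diagonal_conjTranspose, diagonal_mul_diagonal, Pi.star_apply, Complex.star_def,
    Complex.conj_mul', Complex.mul_conj', hχ, Complex.ofReal_one, one_pow, diagonal_one,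
    and_self]

end Matrix

open Matrix

def swapPerm (α β : Type*) : Equiv.Perm (α × α × β) where
  toFun a := (a.2.1, a.1, a.2.2)
  invFun a := (a.2.1, a.1, a.2.2)
  left_inv _ := rfl
  right_inv _ := rfl

def controlledShiftPerm (G R : Type*) [Group G] : Equiv.Perm (G × G × (R → G)) where
  toFun a := (a.1, a.2.1, fun k => a.2.2 k * a.2.1)
  invFun a := (a.1, a.2.1, fun k => a.2.2 k * a.2.1⁻¹)
  left_inv _ := by simp
  right_inv _ := by simp

theorem controlledShiftPerm_mul_swapPerm_apply {G R : Type*} [Group G] (a₀ aᵢ : G) (f : R → G) :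
    (controlledShiftPerm G R * swapPerm G (R → G)) (a₀, aᵢ, f) =
      (aᵢ, a₀, fun k => f k * a₀) :=
  rfl

section FrameChange

variable {G : Type*} [Group G] [Fintype G] [DecidableEq G]
variable {R : Type*} [Fintype R] [DecidableEq R]

theorem sum_smul_ketbra (χ : G → ℂ) : ∑ g : G, χ g • ketbra g = diagonal χ := by
  ext a b
  rcases eq_or_ne a b with rfl | hab
  · simp [Matrix.sum_apply, ketbra]
  · simp only [Matrix.sum_apply, Matrix.smul_apply, ketbra, of_apply, smul_eq_mul, mul_ite,
      mul_one, mul_zero, diagonal_apply_ne _ hab]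
    exact Finset.sum_eq_zero fun c _ => if_neg fun h => hab (h.1.trans h.2.symm)

theorem rightReg_eq_permMatrix (g : G) : rightReg g = (Equiv.mulRight g).permMatrix ℂ := by
  ext a b
  simp [rightReg, eq_mul_inv_iff_mul_eq, eq_comm]

theorem apply_mul_right_of_covariant {US : Matrix G G ℂ} {χ : G → ℂ}
    (hcov : ∀ g : G, rightReg g * US * (rightReg g)ᴴ = χ g • US) (g a b : G) :
    US (a * g) (b * g) = χ g * US a b := by
  have := congrFun₂ (hcov g) a b
  rwa [rightReg_eq_permMatrix, permMatrix_mul_mul_conjTranspose_permMatrix] at this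

theorem prodMat_apply_mul_right {M : R → Matrix G G ℂ} {c : R → ℂ} {g : G}
    (hM : ∀ k a b, M k (a * g) (b * g) = c k * M k a b) (f f' : R → G) :
    prodMat M (fun k => f k * g) (fun k => f' k * g) = (∏ k, c k) * prodMat M f f' := by
  simp only [prodMat, of_apply, hM, Finset.prod_mul_distrib]

theorem embedAt_apply_mul_right {A : Matrix G G ℂ} {c : ℂ} {g : G}
    (hA : ∀ a b, A (a * g) (b * g) = c * A a b) (S : R) (f f' : R → G) :
    embedAt S A (fun k => f k * g) (fun k => f' k * g) = c * embedAt S A f f' := by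
  have hM : ∀ k a b, (if k = S then A else 1) (a * g) (b * g)
      = (if k = S then c else 1) * (if k = S then A else 1) a b := by
    intro k a b
    split_ifs
    · exact hA a b
    · simp [one_apply]
  rw [embedAt, prodMat_apply_mul_right hM, Finset.prod_ite_eq']
  simp

variable (G R)

theorem swap0i_eq_permMatrix : swap0i G R = (swapPerm G (R → G)).permMatrix ℂ := by
  ext a b
  simp [swap0i, swapPerm, Prod.ext_iff, eq_comm, and_left_comm]

theorem Wmap_eq_permMatrix : Wmap G R = (controlledShiftPerm G R).permMatrix ℂ := by
  ext ⟨a₀, aᵢ, f⟩ ⟨b₀, bᵢ, f'⟩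
  simp only [Wmap, Matrix.sum_apply, tens3, of_apply, one_apply, ketbra, ite_and, mul_ite,
    mul_one, mul_zero, prodMat, rightReg, eq_mul_inv_iff_mul_eq, prod_boole, mem_univ,
    forall_const, controlledShiftPerm, PEquiv.toMatrix_apply, Equiv.toPEquiv_apply,
    Equiv.coe_fn_mk, Option.mem_def, Option.some.injEq, Prod.mk.injEq, funext_iff]
  rw [Finset.sum_eq_single aᵢ (fun c _ hc => by simp [Ne.symm hc]) (by simp)]
  split_ifs <;> grind

theorem frameChange_eq_permMatrix :
    frameChange G R = (controlledShiftPerm G R * swapPerm G (R → G)).permMatrix ℂ := by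
  rw [frameChange, swap0i_eq_permMatrix, Wmap_eq_permMatrix, Equiv.Perm.mul_def]
  exact (PEquiv.toMatrix_trans _ _).symm

end FrameChange

theorem frameChange_covariant_control_phase_general
    (G : Type*) [Group G] [Fintype G] [DecidableEq G]
    (R : Type*) [Fintype R] [DecidableEq R]
    (S : R) (US : Matrix G G ℂ)
    (χ : G → ℂ)
    (hχabs : ∀ g : G, ‖χ g‖ = 1)
    (hcov : ∀ g : G, rightReg g * US * (rightReg g)ᴴ = χ g • US) :
    frameChange G R * tens3 1 1 (embedAt S US) * (frameChange G R)ᴴ =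
      tens3 (∑ g : G, χ g • ketbra g) 1 (embedAt S US) ∧
    (∑ g : G, χ g • ketbra g)ᴴ * (∑ g : G, χ g • ketbra g) = 1 ∧
    (∑ g : G, χ g • ketbra g) * (∑ g : G, χ g • ketbra g)ᴴ = 1 := by
  rw [sum_smul_ketbra]
  refine ⟨?_, diagonal_conjTranspose_mul_self_eq_one hχabs⟩
  rw [frameChange_eq_permMatrix, permMatrix_mul_mul_conjTranspose_permMatrix]
  ext ⟨a₀, aᵢ, f⟩ ⟨b₀, bᵢ, f'⟩
  simp only [submatrix_apply, controlledShiftPerm_mul_swapPerm_apply, tens3, of_apply]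
  rcases eq_or_ne a₀ b₀ with rfl | hab
  · rw [embedAt_apply_mul_right (apply_mul_right_of_covariant hcov a₀), diagonal_apply_eq,
      one_apply_eq]
    ring
  · simp [one_apply_ne hab, diagonal_apply_ne _ hab]

/-- Covariant gates acquire only a control phase: if
`U_R(g) U_S U_R(g)† = χ(g) U_S` for a unimodular character `χ : G → ℂ`, then
`U_{0→i} (1 ⊗ U_S) U_{0→i}† = V_0(χ) ⊗ 1_i ⊗ (⊗_{k≠S} 1_k) ⊗ U_S`,
where `V_0(χ) = ∑_g χ(g) |g⟩⟨g|_0` is a diagonal unitary on the old-frame register. -/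
theorem frameChange_covariant_control_phase
    (G : Type*) [Group G] [Fintype G] [DecidableEq G]
    (R : Type*) [Fintype R] [DecidableEq R]
    (S : R) (US : Matrix G G ℂ)
    (hUS : USᴴ * US = 1 ∧ US * USᴴ = 1)
    (χ : G → ℂ)
    (hχ1 : χ 1 = 1)
    (hχmul : ∀ g h : G, χ (g * h) = χ g * χ h)
    (hχabs : ∀ g : G, ‖χ g‖ = 1)
    (hcov : ∀ g : G, rightReg g * US * (rightReg g)ᴴ = χ g • US) :
    frameChange G R * tens3 1 1 (embedAt S US) * (frameChange G R)ᴴ =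
      tens3 (∑ g : G, χ g • ketbra g) 1 (embedAt S US) ∧
    (∑ g : G, χ g • ketbra g)ᴴ * (∑ g : G, χ g • ketbra g) = 1 ∧
    (∑ g : G, χ g • ketbra g) * (∑ g : G, χ g • ketbra g)ᴴ = 1 :=
  frameChange_covariant_control_phase_general G R S US χ hχabs hcov
end

section
/- Generic gates become entangling: Let G be a finite group, let U be a unitary on a finite-dimensional Hilbert space H_S, and define α_g(U) = U_R(g) U U_R(g)† for the right-regular representation U_R on H_S = ℂ^G (with S itself carrying ℂ^G). Consider the controlled unitary K = ∑_{g∈G} |g⟩⟨g|_0 ⊗ α_g(U) on ℂ^G ⊗ H_S. If there exist unitaries V_0, W_0 on ℂ^G and V_S, W_S, U_* on H_S such that (V_0 ⊗ V_S) K (W_0 ⊗ W_S) = 1_0 ⊗ U_*, then all the operators α_g(U), g ∈ G, are pairwise proportional (each pair related by a complex scalar of modulus one). Consequently, if there exist g, h ∈ G such that α_g(U) and α_h(U) are not scalar multiples of each other, then K is not equivalent under local unitaries to a tensor product, i.e., K is a genuinely entangling gate between the frame register and the system S. -/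
open Matrix Finset Kronecker

/-- The conjugation action `α_g(U) = U_R(g) U U_R(g)†`. -/
noncomputable def alphaAct {G : Type*} [Group G] [Fintype G] [DecidableEq G]
    (g : G) (U : Matrix G G ℂ) : Matrix G G ℂ :=
  rightReg g * U * (rightReg g)ᴴ

/-- The controlled unitary `K = ∑_g |g⟩⟨g|_0 ⊗ α_g(U)` on `ℂ^G ⊗ ℂ^G`. -/
noncomputable def ctrlK {G : Type*} [Group G] [Fintype G] [DecidableEq G]
    (U : Matrix G G ℂ) : Matrix (G × G) (G × G) ℂ :=
  ∑ g : G, ketbra g ⊗ₖ alphaAct g U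

/-- A matrix is unitary. -/
def IsUnit' {n : Type*} [Fintype n] [DecidableEq n] (A : Matrix n n ℂ) : Prop :=
  Aᴴ * A = 1 ∧ A * Aᴴ = 1

/-!
Undoing the local unitaries exhibits `K` itself as a Kronecker product `P ⊗ Q`. The diagonal
block of `K` at control value `g` is then both `α_g(U)` and `P g g • Q`; as `α_g(U)` and `Q` are
unitary, `|P g g| = 1`, and `α_g(U) = (P g g / P h h) • α_h(U)`.
-/

theorem isUnit'_iff_mem_unitary {n : Type*} [Fintype n] [DecidableEq n] {A : Matrix n n ℂ} :
    IsUnit' A ↔ A ∈ unitary (Matrix n n ℂ) := by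
  rw [Unitary.mem_iff, star_eq_conjTranspose, IsUnit']

theorem Equiv.Perm.permMatrix_mem_unitary {n R : Type*} [Fintype n] [DecidableEq n]
    [CommRing R] [StarRing R] (σ : Equiv.Perm n) :
    σ.permMatrix R ∈ unitary (Matrix n n R) := by
  rw [Matrix.mem_unitaryGroup_iff', star_eq_conjTranspose, conjTranspose_permMatrix,
    ← permMatrix_mul, mul_inv_cancel, permMatrix_one]

theorem rightReg_eq_permMatrix_s6 {G : Type*} [Group G] [Fintype G] [DecidableEq G] (h : G) :
    rightReg h = (Equiv.mulRight h).permMatrix ℂ := by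
  ext a b
  simp [rightReg, PEquiv.toMatrix_apply, eq_mul_inv_iff_mul_eq, eq_comm]

theorem alphaAct_mem_unitary {G : Type*} [Group G] [Fintype G] [DecidableEq G]
    {U : Matrix G G ℂ} (hU : U ∈ unitary (Matrix G G ℂ)) (g : G) :
    alphaAct g U ∈ unitary (Matrix G G ℂ) := by
  have hR := rightReg_eq_permMatrix_s6 g ▸ (Equiv.mulRight g).permMatrix_mem_unitary (R := ℂ)
  rw [alphaAct, ← star_eq_conjTranspose]
  exact mul_mem (mul_mem hR hU) (Unitary.star_mem hR)

theorem eq_kronecker_of_kronecker_mul_mul_kronecker_eq_kronecker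
    {m n R : Type*} [Fintype m] [DecidableEq m] [Fintype n] [DecidableEq n]
    [CommRing R] [StarRing R] {A C : Matrix m m R} {B D : Matrix n n R}
    (hA : A ∈ unitary (Matrix m m R)) (hB : B ∈ unitary (Matrix n n R))
    (hC : C ∈ unitary (Matrix m m R)) (hD : D ∈ unitary (Matrix n n R))
    {K : Matrix (m × n) (m × n) R} {P : Matrix m m R} {Q : Matrix n n R}
    (h : (A ⊗ₖ B) * K * (C ⊗ₖ D) = P ⊗ₖ Q) :
    K = (star A * P * star C) ⊗ₖ (star B * Q * star D) := by
  have hAB := kronecker_mem_unitary hA hB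
  have hCD := kronecker_mem_unitary hC hD
  calc K = star (A ⊗ₖ B) * ((A ⊗ₖ B) * K * (C ⊗ₖ D)) * star (C ⊗ₖ D) := by
        simp only [← mul_assoc, Unitary.star_mul_self_of_mem hAB, one_mul]
        simp only [mul_assoc, Unitary.mul_star_self_of_mem hCD, mul_one]
    _ = _ := by
        rw [h, star_eq_conjTranspose, star_eq_conjTranspose, conjTranspose_kronecker,
          conjTranspose_kronecker, ← mul_kronecker_mul, ← mul_kronecker_mul]
        rfl

theorem sum_ketbra_kronecker_apply_diag {G : Type*} [Group G] [Fintype G] [DecidableEq G]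
    {n : Type*} (f : G → Matrix n n ℂ) (k : G) (x y : n) :
    (∑ g, ketbra g ⊗ₖ f g) (k, x) (k, y) = f k x y := by
  simp [Matrix.sum_apply, ketbra]

theorem norm_eq_one_of_smul_mem_unitary {n : Type*} [Fintype n] [DecidableEq n] [Nonempty n]
    {Q : Matrix n n ℂ} (hQ : Q ∈ unitary (Matrix n n ℂ)) {c : ℂ}
    (hcQ : c • Q ∈ unitary (Matrix n n ℂ)) : ‖c‖ = 1 := by
  have hc : (star c * c) • (1 : Matrix n n ℂ) = 1 := by
    calc (star c * c) • (1 : Matrix n n ℂ) = star (c • Q) * (c • Q) := by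
          rw [star_smul, smul_mul_smul_comm, Unitary.star_mul_self_of_mem hQ]
      _ = 1 := Unitary.star_mul_self_of_mem hcQ
  obtain ⟨i⟩ := ‹Nonempty n›
  have hconj : starRingEnd ℂ c * c = 1 := by simpa using congrFun (congrFun hc i) i
  rw [Complex.conj_mul'] at hconj
  exact (pow_eq_one_iff_of_nonneg (norm_nonneg c) two_ne_zero).mp (by exact_mod_cast hconj)

theorem alphaAct_eq_smul_of_ctrlK_eq_kronecker {G : Type*} [Group G] [Fintype G] [DecidableEq G]
    {U P Q : Matrix G G ℂ} (hK : ctrlK U = P ⊗ₖ Q) (k : G) : alphaAct k U = P k k • Q := by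
  ext x y
  rw [← sum_ketbra_kronecker_apply_diag (fun g => alphaAct g U) k x y]
  change ctrlK U (k, x) (k, y) = _
  simp [hK]

theorem alphaAct_proportional_of_localUnitary_eq_one_kronecker
    {G : Type*} [Group G] [Fintype G] [DecidableEq G] {U : Matrix G G ℂ} (hU : IsUnit' U)
    (hlocal : ∃ V0 W0 : Matrix G G ℂ, ∃ VS WS Ustar : Matrix G G ℂ,
        IsUnit' V0 ∧ IsUnit' W0 ∧ IsUnit' VS ∧ IsUnit' WS ∧ IsUnit' Ustar ∧
        (V0 ⊗ₖ VS) * ctrlK U * (W0 ⊗ₖ WS) = (1 : Matrix G G ℂ) ⊗ₖ Ustar)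
    (g h : G) : ∃ c : ℂ, ‖c‖ = 1 ∧ alphaAct g U = c • alphaAct h U := by
  obtain ⟨V0, W0, VS, WS, Ustar, hV0, hW0, hVS, hWS, hUstar, heq⟩ := hlocal
  simp only [isUnit'_iff_mem_unitary] at hU hV0 hW0 hVS hWS hUstar
  set P := star V0 * 1 * star W0
  set Q := star VS * Ustar * star WS
  have hQ : Q ∈ unitary (Matrix G G ℂ) :=
    mul_mem (mul_mem (Unitary.star_mem hVS) hUstar) (Unitary.star_mem hWS)
  have hα := alphaAct_eq_smul_of_ctrlK_eq_kronecker
    (eq_kronecker_of_kronecker_mul_mul_kronecker_eq_kronecker hV0 hVS hW0 hWS heq)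
  have hnorm (k : G) : ‖P k k‖ = 1 :=
    norm_eq_one_of_smul_mem_unitary hQ (hα k ▸ alphaAct_mem_unitary hU k)
  have hPh : P h h ≠ 0 := norm_ne_zero_iff.mp (by simp [hnorm])
  refine ⟨P g g / P h h, by rw [norm_div, hnorm, hnorm, div_one], ?_⟩
  rw [hα g, hα h, smul_smul, div_mul_cancel₀ _ hPh]

/-- Generic gates become entangling: if the controlled unitary
`K = ∑_g |g⟩⟨g|_0 ⊗ α_g(U)` is mapped to a tensor product `1_0 ⊗ U_*` by local
unitaries, then all the `α_g(U)` are pairwise proportional by a unimodular scalar.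
Consequently, if two of the `α_g(U)` are not scalar multiples of each other, then
`K` is not equivalent under local unitaries to a tensor product. -/
theorem generic_gates_entangling
    (G : Type*) [Group G] [Fintype G] [DecidableEq G]
    (U : Matrix G G ℂ) (hU : IsUnit' U) :
    ((∃ V0 W0 : Matrix G G ℂ, ∃ VS WS Ustar : Matrix G G ℂ,
        IsUnit' V0 ∧ IsUnit' W0 ∧ IsUnit' VS ∧ IsUnit' WS ∧ IsUnit' Ustar ∧
        (V0 ⊗ₖ VS) * ctrlK U * (W0 ⊗ₖ WS) = (1 : Matrix G G ℂ) ⊗ₖ Ustar) →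
      ∀ g h : G, ∃ c : ℂ, ‖c‖ = 1 ∧ alphaAct g U = c • alphaAct h U) ∧
    ((∃ g h : G, ∀ c : ℂ, alphaAct g U ≠ c • alphaAct h U) →
      ¬ ∃ V0 W0 : Matrix G G ℂ, ∃ VS WS Ustar : Matrix G G ℂ,
        IsUnit' V0 ∧ IsUnit' W0 ∧ IsUnit' VS ∧ IsUnit' WS ∧ IsUnit' Ustar ∧
        (V0 ⊗ₖ VS) * ctrlK U * (W0 ⊗ₖ WS) = (1 : Matrix G G ℂ) ⊗ₖ Ustar) := by
  refine ⟨fun hlocal => alphaAct_proportional_of_localUnitary_eq_one_kronecker hU hlocal, ?_⟩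
  rintro ⟨g, h, hgh⟩ hlocal
  obtain ⟨c, -, hc⟩ := alphaAct_proportional_of_localUnitary_eq_one_kronecker hU hlocal g h
  exact hgh c hc
end

section
/- Full complementarity relation: Let |Ψ⟩ ∈ ℂ² ⊗ ℂ² be a unit vector with reduced density matrix ρ_X (partial trace over the second factor), and write ρ_X = (1/2)(1 + r_x X + r_y Y + r_z Z) with real Bloch components r_x, r_y, r_z, where X, Y, Z are the Pauli matrices. Then 4 det(ρ_X) = 1 − (r_x² + r_y² + r_z²), and hence the squared concurrence C² = 4 det(ρ_X), the local coherence D² = r_x² + r_y² = 4|(ρ_X)_{01}|², and the predictability P² = r_z² = ((ρ_X)_{00} − (ρ_X)_{11})² satisfy C² + D² + P² = 1. -/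
open Matrix Finset

/-- Pauli X. -/
noncomputable def Xm : Matrix (Fin 2) (Fin 2) ℂ := !![0, 1; 1, 0]

/-- Pauli Y. -/
noncomputable def Ym : Matrix (Fin 2) (Fin 2) ℂ := !![0, -Complex.I; Complex.I, 0]

/-- Pauli Z. -/
noncomputable def Zm : Matrix (Fin 2) (Fin 2) ℂ := !![1, 0; 0, -1]

/-- Density matrix `ρ = |Ψ⟩⟨Ψ|` of a two-qubit pure state. -/
noncomputable def dm2 (ψ : Fin 2 × Fin 2 → ℂ) :
    Matrix (Fin 2 × Fin 2) (Fin 2 × Fin 2) ℂ :=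
  Matrix.of fun x y => ψ x * star (ψ y)

/-- Reduced density matrix `ρ_X`: partial trace over the second factor. -/
noncomputable def rhoX (ψ : Fin 2 × Fin 2 → ℂ) : Matrix (Fin 2) (Fin 2) ℂ :=
  Matrix.of fun a a' => ∑ b : Fin 2, dm2 ψ (a, b) (a', b)

/-- Full complementarity relation: if the reduced state has the Bloch
decomposition `ρ_X = (1/2)(1 + r_x X + r_y Y + r_z Z)` with real `r_x, r_y, r_z`, then
`4 det(ρ_X) = 1 − (r_x² + r_y² + r_z²)`, and the squared concurrence `C² = 4 det(ρ_X)`,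
local coherence `D² = r_x² + r_y² = 4|(ρ_X)_{01}|²`, and predictability
`P² = r_z² = ((ρ_X)_{00} − (ρ_X)_{11})²` satisfy `C² + D² + P² = 1`. -/
theorem full_complementarity
    (ψ : Fin 2 × Fin 2 → ℂ) (hψ : ∑ x : Fin 2 × Fin 2, ‖ψ x‖ ^ 2 = 1)
    (rx ry rz : ℝ)
    (hBloch : rhoX ψ =
      (1 / 2 : ℂ) • (1 + (rx : ℂ) • Xm + (ry : ℂ) • Ym + (rz : ℂ) • Zm)) :
    4 * (rhoX ψ).det = 1 - ((rx ^ 2 + ry ^ 2 + rz ^ 2 : ℝ) : ℂ) ∧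
    ((rx ^ 2 + ry ^ 2 : ℝ) : ℂ) = 4 * (‖rhoX ψ 0 1‖ ^ 2 : ℝ) ∧
    ((rz ^ 2 : ℝ) : ℂ) = (rhoX ψ 0 0 - rhoX ψ 1 1) ^ 2 ∧
    4 * (rhoX ψ).det + ((rx ^ 2 + ry ^ 2 : ℝ) : ℂ) + ((rz ^ 2 : ℝ) : ℂ) = 1 := by
  rw [hBloch]
  have e01 : ((1 / 2 : ℂ) • (1 + (rx : ℂ) • Xm + (ry : ℂ) • Ym + (rz : ℂ) • Zm)) 0 1
      = ((rx : ℂ) - (ry : ℂ) * Complex.I) / 2 := by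
    simp [Xm, Ym, Zm, Matrix.smul_apply, Matrix.add_apply, Matrix.one_apply]
    ring
  have e00 : ((1 / 2 : ℂ) • (1 + (rx : ℂ) • Xm + (ry : ℂ) • Ym + (rz : ℂ) • Zm)) 0 0
      = (1 + (rz : ℂ)) / 2 := by
    simp [Xm, Ym, Zm, Matrix.smul_apply, Matrix.add_apply, Matrix.one_apply]
    ring
  have e11 : ((1 / 2 : ℂ) • (1 + (rx : ℂ) • Xm + (ry : ℂ) • Ym + (rz : ℂ) • Zm)) 1 1
      = (1 - (rz : ℂ)) / 2 := by
    simp [Xm, Ym, Zm, Matrix.smul_apply, Matrix.add_apply, Matrix.one_apply]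
    ring
  have e10 : ((1 / 2 : ℂ) • (1 + (rx : ℂ) • Xm + (ry : ℂ) • Ym + (rz : ℂ) • Zm)) 1 0
      = ((rx : ℂ) + (ry : ℂ) * Complex.I) / 2 := by
    simp [Xm, Ym, Zm, Matrix.smul_apply, Matrix.add_apply, Matrix.one_apply]
    ring
  have hdet : 4 * ((1 / 2 : ℂ) • (1 + (rx : ℂ) • Xm + (ry : ℂ) • Ym + (rz : ℂ) • Zm)).det
      = 1 - ((rx ^ 2 + ry ^ 2 + rz ^ 2 : ℝ) : ℂ) := by
    rw [Matrix.det_fin_two, e00, e01, e10, e11]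
    push_cast
    ring_nf
    simp [Complex.I_sq]
    ring
  have hnorm : ((rx ^ 2 + ry ^ 2 : ℝ) : ℂ)
      = 4 * ((‖((1 / 2 : ℂ) • (1 + (rx : ℂ) • Xm + (ry : ℂ) • Ym + (rz : ℂ) • Zm)) 0 1‖ ^ 2 : ℝ) : ℂ) := by
    rw [e01]
    have : ‖((rx : ℂ) - (ry : ℂ) * Complex.I) / 2‖ ^ 2
        = Complex.normSq (((rx : ℂ) - (ry : ℂ) * Complex.I) / 2) := by
      rw [← Complex.sq_norm]
    rw [this]
    simp [Complex.normSq_apply]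
    push_cast
    ring
  refine ⟨hdet, hnorm, ?_, ?_⟩
  · rw [e00, e11]; push_cast; ring
  · rw [hdet]; push_cast; ring
end

section
/- Hadamard in frame B: On (ℂ²)^{⊗3} with factors A, B, C, let U_{C→B} = SWAP_{B,C} ∘ W_{BA} with W_{BA} = |0⟩⟨0|_B ⊗ 1_A ⊗ 1_C + |1⟩⟨1|_B ⊗ X_A ⊗ 1_C. Then the Hadamard on A transforms as U_{C→B} · (H_A ⊗ 1_B ⊗ 1_C) · U_{C→B}† = |0⟩⟨0|_C ⊗ H_A ⊗ 1_B + |1⟩⟨1|_C ⊗ (X H X)_A ⊗ 1_B; that is, in frame B the local Hadamard becomes a C-controlled single-qubit gate on A whose two branches are related by conjugation with X. -/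
open Matrix Finset Kronecker

/-- Three-qubit index type: factors labeled A, B, C. -/
abbrev Q3 := Fin 2 × Fin 2 × Fin 2

/-- Pauli X. -/
noncomputable def X : Matrix (Fin 2) (Fin 2) ℂ := !![0, 1; 1, 0]

/-- Pauli Z. -/
noncomputable def Z : Matrix (Fin 2) (Fin 2) ℂ := !![1, 0; 0, -1]

/-- Hadamard gate. -/
noncomputable def Hd : Matrix (Fin 2) (Fin 2) ℂ :=
  (Real.sqrt 2 : ℂ)⁻¹ • !![1, 1; 1, -1]

/-- Projector `|0⟩⟨0|`. -/
noncomputable def P0 : Matrix (Fin 2) (Fin 2) ℂ := !![1, 0; 0, 0]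

/-- Projector `|1⟩⟨1|`. -/
noncomputable def P1 : Matrix (Fin 2) (Fin 2) ℂ := !![0, 0; 0, 1]

/-- Tensor product `A ⊗ B ⊗ C` of three one-qubit operators, as an 8×8 matrix
on `ℂ²⊗ℂ²⊗ℂ²` with factors A, B, C. -/
noncomputable def k3 (P Q T : Matrix (Fin 2) (Fin 2) ℂ) : Matrix Q3 Q3 ℂ :=
  Matrix.of fun a b => P a.1 b.1 * Q a.2.1 b.2.1 * T a.2.2 b.2.2

/-- `SWAP` of factors A and C. -/
noncomputable def SWAP_AC : Matrix Q3 Q3 ℂ :=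
  Matrix.of fun a b => if a.1 = b.2.2 ∧ a.2.1 = b.2.1 ∧ a.2.2 = b.1 then 1 else 0

/-- `SWAP` of factors A and B. -/
noncomputable def SWAP_AB : Matrix Q3 Q3 ℂ :=
  Matrix.of fun a b => if a.1 = b.2.1 ∧ a.2.1 = b.1 ∧ a.2.2 = b.2.2 then 1 else 0

/-- `SWAP` of factors B and C. -/
noncomputable def SWAP_BC : Matrix Q3 Q3 ℂ :=
  Matrix.of fun a b => if a.1 = b.1 ∧ a.2.1 = b.2.2 ∧ a.2.2 = b.2.1 then 1 else 0

/-- Computational basis vector `|abc⟩ = |a⟩_A ⊗ |b⟩_B ⊗ |c⟩_C`. -/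
def ket3 (a b c : Fin 2) : Q3 → ℂ := fun x => if x = (a, b, c) then 1 else 0

/-- `CNOT` with control A and target B (identity on C). -/
noncomputable def CNOT_AB : Matrix Q3 Q3 ℂ := k3 P0 1 1 + k3 P1 X 1

/-- `CNOT` with control A and target C (identity on B). -/
noncomputable def CNOT_AC : Matrix Q3 Q3 ℂ := k3 P0 1 1 + k3 P1 1 X

/-- `CNOT` with control B and target C (identity on A). -/
noncomputable def CNOT_BC : Matrix Q3 Q3 ℂ := k3 1 P0 1 + k3 1 P1 X

/-- `CNOT` with control C and target B (identity on A). -/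
noncomputable def CNOT_CB : Matrix Q3 Q3 ℂ := k3 1 1 P0 + k3 1 X P1

/-- `W_{BA} = |0⟩⟨0|_B ⊗ 1_A ⊗ 1_C + |1⟩⟨1|_B ⊗ X_A ⊗ 1_C`. -/
noncomputable def WBA3 : Matrix Q3 Q3 ℂ := k3 1 P0 1 + k3 X P1 1

/-- The frame-change operator `U_{C→B} = SWAP_{B,C} ∘ W_{BA}`. -/
noncomputable def UCB : Matrix Q3 Q3 ℂ := SWAP_BC * WBA3

/-!
`W_{BA}` is the B-controlled `X` on A, and `|0⟩⟨0|`, `|1⟩⟨1|` are orthogonal idempotents, so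
conjugating `M_A` by the self-adjoint `W_{BA}` leaves `M` on the `|0⟩_B` branch and gives `XMX` on
the `|1⟩_B` branch, for every one-qubit `M`. Conjugating by `SWAP_{B,C}` then moves the control
from B to C.
-/

lemma k3_mul (P Q T P' Q' T' : Matrix (Fin 2) (Fin 2) ℂ) :
    k3 P Q T * k3 P' Q' T' = k3 (P * P') (Q * Q') (T * T') := by
  ext ⟨a, b, c⟩ ⟨d, e, f⟩
  simp only [k3, mul_apply, of_apply, Fintype.sum_prod_type, Fin.sum_univ_two]
  ring

lemma k3_conjTranspose (P Q T : Matrix (Fin 2) (Fin 2) ℂ) :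
    (k3 P Q T)ᴴ = k3 Pᴴ Qᴴ Tᴴ := by
  ext a b
  simp only [k3, conjTranspose_apply, of_apply, star_mul']

lemma k3_zero_middle (P T : Matrix (Fin 2) (Fin 2) ℂ) : k3 P 0 T = 0 := by
  ext a b
  simp [k3]

lemma X_isHermitian : X.IsHermitian := by
  ext i j; fin_cases i <;> fin_cases j <;> simp [X]

lemma P0_isHermitian : P0.IsHermitian := by
  ext i j; fin_cases i <;> fin_cases j <;> simp [P0]

lemma P1_isHermitian : P1.IsHermitian := by
  ext i j; fin_cases i <;> fin_cases j <;> simp [P1]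

lemma P0_mul_P0 : P0 * P0 = P0 := by
  ext i j; fin_cases i <;> fin_cases j <;> simp [P0]

lemma P1_mul_P1 : P1 * P1 = P1 := by
  ext i j; fin_cases i <;> fin_cases j <;> simp [P1]

lemma P0_mul_P1 : P0 * P1 = 0 := by
  ext i j; fin_cases i <;> fin_cases j <;> simp [P0, P1]

lemma P1_mul_P0 : P1 * P0 = 0 := by
  ext i j; fin_cases i <;> fin_cases j <;> simp [P0, P1]

def swapBC : Q3 ≃ Q3 := (Equiv.refl _).prodCongr (Equiv.prodComm _ _)

lemma SWAP_BC_eq_toMatrix : SWAP_BC = swapBC.toPEquiv.toMatrix := by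
  ext a b
  simp [SWAP_BC, swapBC, PEquiv.toMatrix_apply, Prod.ext_iff, and_comm]

lemma SWAP_BC_conjTranspose : SWAP_BCᴴ = SWAP_BC := by
  ext a b
  simp only [SWAP_BC, conjTranspose_apply, of_apply]
  split_ifs <;> simp_all [eq_comm]

lemma SWAP_BC_mul_k3_mul_SWAP_BC (P Q T : Matrix (Fin 2) (Fin 2) ℂ) :
    SWAP_BC * k3 P Q T * SWAP_BC = k3 P T Q := by
  rw [SWAP_BC_eq_toMatrix, PEquiv.toMatrix_toPEquiv_mul, PEquiv.mul_toMatrix_toPEquiv]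
  ext a b
  exact mul_right_comm _ _ _

lemma WBA3_conjTranspose : WBA3ᴴ = WBA3 := by
  simp only [WBA3, conjTranspose_add, k3_conjTranspose, conjTranspose_one, X_isHermitian.eq,
    P0_isHermitian.eq, P1_isHermitian.eq]

lemma WBA3_mul_k3_mul_WBA3 (M : Matrix (Fin 2) (Fin 2) ℂ) :
    WBA3 * k3 M 1 1 * WBA3 = k3 M P0 1 + k3 (X * M * X) P1 1 := by
  simp only [WBA3, add_mul, mul_add, k3_mul, one_mul, mul_one, P0_mul_P0, P0_mul_P1, P1_mul_P0,
    P1_mul_P1, k3_zero_middle]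
  abel

lemma UCB_mul_k3_mul_UCB_conjTranspose (M : Matrix (Fin 2) (Fin 2) ℂ) :
    UCB * k3 M 1 1 * UCBᴴ = k3 M 1 P0 + k3 (X * M * X) 1 P1 := by
  calc UCB * k3 M 1 1 * UCBᴴ = SWAP_BC * (WBA3 * k3 M 1 1 * WBA3) * SWAP_BC := by
        simp only [UCB, conjTranspose_mul, WBA3_conjTranspose, SWAP_BC_conjTranspose,
          Matrix.mul_assoc]
    _ = k3 M 1 P0 + k3 (X * M * X) 1 P1 := by
        rw [WBA3_mul_k3_mul_WBA3, mul_add, add_mul, SWAP_BC_mul_k3_mul_SWAP_BC,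
          SWAP_BC_mul_k3_mul_SWAP_BC]

/-- Hadamard in frame B:
`U_{C→B} · (H_A ⊗ 1_B ⊗ 1_C) · U_{C→B}† = |0⟩⟨0|_C ⊗ H_A ⊗ 1_B + |1⟩⟨1|_C ⊗ (XHX)_A ⊗ 1_B`;
in frame B the local Hadamard becomes a C-controlled single-qubit gate on A whose two
branches are related by conjugation with X. -/
theorem hadamard_in_frame_B :
    UCB * k3 Hd 1 1 * UCBᴴ = k3 Hd 1 P0 + k3 (X * Hd * X) 1 P1 := by
  exact UCB_mul_k3_mul_UCB_conjTranspose Hd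
end

section
/- Multi-qubit ℤ₂ gate transform: Let the frame register 0 and each qubit in a finite set S carry ℂ² with the ℤ₂ regular representation U_R(0) = 1, U_R(1) = X, and let X_S = ⊗_{q∈S} X denote the global parity operator on H_S = (ℂ²)^{⊗|S|}. Under the ℤ₂ frame change 0 → i implemented by U_{0→i} = SWAP_{0,i} ∘ W_i with W_i = |0⟩⟨0|_i ⊗ 1 + |1⟩⟨1|_i ⊗ (applied X on every non-reference qubit), every unitary U_S on H_S transforms as U_{0→i} (1 ⊗ U_S) U_{0→i}† = |0⟩⟨0|_0 ⊗ U_S + |1⟩⟨1|_0 ⊗ (X_S U_S X_S), tensored with the identity on all remaining factors. -/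
open Matrix Finset

/-- Pauli X. -/
noncomputable def Xq : Matrix (Fin 2) (Fin 2) ℂ := !![0, 1; 1, 0]

/-- The ℤ₂ regular representation on a qubit: `U_R(0) = 1`, `U_R(1) = X`. -/
noncomputable def URz (g : Fin 2) : Matrix (Fin 2) (Fin 2) ℂ :=
  if g = 0 then 1 else Xq

/-- The rank-one projector `|g⟩⟨g|` on a qubit. -/
noncomputable def projq (g : Fin 2) : Matrix (Fin 2) (Fin 2) ℂ :=
  Matrix.of fun a b => if a = g ∧ b = g then 1 else 0

/-- Tensor product of an operator on the frame register `0`, an operator on the new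
frame `i`, and an operator on the remaining registers `⊗_{k∈R} ℂ²`. -/
noncomputable def tens3q {R : Type*} [Fintype R] [DecidableEq R]
    (P Q : Matrix (Fin 2) (Fin 2) ℂ)
    (T : Matrix (R → Fin 2) (R → Fin 2) ℂ) :
    Matrix (Fin 2 × Fin 2 × (R → Fin 2)) (Fin 2 × Fin 2 × (R → Fin 2)) ℂ :=
  Matrix.of fun a b => P a.1 b.1 * Q a.2.1 b.2.1 * T a.2.2 b.2.2

/-- The tensor product `⊗_{k∈R} M k` of one-qubit operators. -/
noncomputable def prodMatq {R : Type*} [Fintype R] [DecidableEq R]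
    (M : R → Matrix (Fin 2) (Fin 2) ℂ) : Matrix (R → Fin 2) (R → Fin 2) ℂ :=
  Matrix.of fun f f' => ∏ k : R, M k (f k) (f' k)

/-- `W_i = ∑_{g∈{0,1}} |g⟩⟨g|_i ⊗ 1_0 ⊗ ⊗_{k∈R} U_R(g)_k`, which applies `X` to every
non-reference qubit conditioned on the new frame being in state `|1⟩`. -/
noncomputable def Wq (R : Type*) [Fintype R] [DecidableEq R] :
    Matrix (Fin 2 × Fin 2 × (R → Fin 2)) (Fin 2 × Fin 2 × (R → Fin 2)) ℂ :=
  ∑ g : Fin 2, tens3q (1 : Matrix (Fin 2) (Fin 2) ℂ) (projq g) (prodMatq fun _ : R => URz g)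

/-- `SWAP_{0,i}`: exchange of the tensor factors `0` and `i`. -/
noncomputable def swapq (R : Type*) [Fintype R] [DecidableEq R] :
    Matrix (Fin 2 × Fin 2 × (R → Fin 2)) (Fin 2 × Fin 2 × (R → Fin 2)) ℂ :=
  Matrix.of fun a b => if a.1 = b.2.1 ∧ a.2.1 = b.1 ∧ a.2.2 = b.2.2 then 1 else 0

/-- The ℤ₂ frame-change unitary `U_{0→i} = SWAP_{0,i} ∘ W_i`. -/
noncomputable def Uq (R : Type*) [Fintype R] [DecidableEq R] :
    Matrix (Fin 2 × Fin 2 × (R → Fin 2)) (Fin 2 × Fin 2 × (R → Fin 2)) ℂ :=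
  swapq R * Wq R

/-- Embedding of an operator on `H_S = (ℂ²)^{⊗|S|}`, for a finite subset `S ⊆ R` of
the registers, into `⊗_{k∈R} ℂ²` (identity on all registers outside `S`). -/
noncomputable def embedS {R : Type*} [Fintype R] [DecidableEq R] (S : Finset R)
    (U : Matrix (↥S → Fin 2) (↥S → Fin 2) ℂ) :
    Matrix (R → Fin 2) (R → Fin 2) ℂ :=
  Matrix.of fun f f' =>
    U (fun k => f k.1) (fun k => f' k.1) *
      (if ∀ k ∉ S, f k = f' k then 1 else 0)

/-- The global parity operator `X_S = ⊗_{q∈S} X` on `H_S`. -/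
noncomputable def XS {R : Type*} [Fintype R] [DecidableEq R] (S : Finset R) :
    Matrix (↥S → Fin 2) (↥S → Fin 2) ℂ :=
  Matrix.of fun h h' => ∏ k : ↥S, Xq (h k) (h' k)


section AuxZ2

lemma Xq_apply (a b : Fin 2) : Xq a b = if b = a + 1 then 1 else 0 := by
  fin_cases a <;> fin_cases b <;> simp [Xq]

lemma Xq_apply' (a b : Fin 2) : Xq a b = if a = b + 1 then 1 else 0 := by
  fin_cases a <;> fin_cases b <;> simp [Xq]

lemma URz_apply (g a b : Fin 2) : URz g a b = if b = a + g then 1 else 0 := by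
  fin_cases g <;> fin_cases a <;> fin_cases b <;> simp [URz, Xq, Matrix.one_apply]

variable {R : Type*} [Fintype R] [DecidableEq R]

lemma prod_URz (g : Fin 2) (f f' : R → Fin 2) :
    prodMatq (fun _ : R => URz g) f f' = if f' = fun k => f k + g then 1 else 0 := by
  simp only [prodMatq, Matrix.of_apply, URz_apply, Finset.prod_boole]
  simp [funext_iff]

lemma Wq_apply (a b : Fin 2 × Fin 2 × (R → Fin 2)) :
    Wq R a b = if a.1 = b.1 ∧ a.2.1 = b.2.1 ∧ b.2.2 = (fun k => a.2.2 k + a.2.1) then 1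
      else 0 := by
  obtain ⟨a1, ai, f⟩ := a
  obtain ⟨b1, bi, f'⟩ := b
  simp only [Wq, Matrix.sum_apply, tens3q, Matrix.of_apply, prod_URz, projq,
    Fin.sum_univ_two, Matrix.one_apply]
  fin_cases ai <;> fin_cases bi <;> simp <;> split_ifs <;> simp_all

lemma Uq_apply (a b : Fin 2 × Fin 2 × (R → Fin 2)) :
    Uq R a b = if b = (a.2.1, a.1, fun k => a.2.2 k + a.1) then 1 else 0 := by
  rw [Uq, Matrix.mul_apply]
  have hsw : ∀ c, swapq R a c = if c = (a.2.1, a.1, a.2.2) then 1 else 0 := by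
    rintro ⟨c1, c2, c3⟩
    simp only [swapq, Matrix.of_apply, Prod.mk.injEq]
    congr 1
    exact propext ⟨fun ⟨h1, h2, h3⟩ => ⟨h2.symm, h1.symm, h3.symm⟩,
      fun ⟨h1, h2, h3⟩ => ⟨h2.symm, h1.symm, h3.symm⟩⟩
  simp only [hsw, ite_mul, one_mul, zero_mul, Finset.sum_ite_eq', Finset.mem_univ,
    if_true, Wq_apply]
  obtain ⟨b1, bi, f'⟩ := b
  simp only [Prod.mk.injEq]
  congr 1
  exact propext ⟨fun ⟨h1, h2, h3⟩ => ⟨h1.symm, h2.symm, h3⟩,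
    fun ⟨h1, h2, h3⟩ => ⟨h1.symm, h2.symm, h3⟩⟩

lemma XS_apply (S : Finset R) (u p : ↥S → Fin 2) :
    XS S u p = if p = fun k => u k + 1 then 1 else 0 := by
  simp only [XS, Matrix.of_apply, Xq_apply, Finset.prod_boole]
  simp [funext_iff]

lemma XS_apply' (S : Finset R) (u p : ↥S → Fin 2) :
    XS S u p = if u = fun k => p k + 1 then 1 else 0 := by
  simp only [XS, Matrix.of_apply, Xq_apply', Finset.prod_boole]
  simp [funext_iff]

lemma XUX_apply (S : Finset R) (US : Matrix (↥S → Fin 2) (↥S → Fin 2) ℂ)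
    (u v : ↥S → Fin 2) :
    (XS S * US * XS S) u v = US (fun k => u k + 1) (fun k => v k + 1) := by
  rw [Matrix.mul_apply]
  simp only [XS_apply' S _ v, mul_ite, mul_one, mul_zero, Finset.sum_ite_eq, Finset.sum_ite_eq',
    Finset.mem_univ, if_true]
  rw [Matrix.mul_apply]
  simp only [XS_apply S u, ite_mul, one_mul, zero_mul, Finset.sum_ite_eq', Finset.sum_ite_eq,
    Finset.mem_univ, if_true]

lemma embed_shift (S : Finset R) (US : Matrix (↥S → Fin 2) (↥S → Fin 2) ℂ)
    (f h : R → Fin 2) :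
    embedS S US (fun k => f k + 1) (fun k => h k + 1) =
      embedS S (XS S * US * XS S) f h := by
  simp only [embedS, Matrix.of_apply, XUX_apply]
  congr 1
  congr 1
  exact propext ⟨fun H k hk => by have := H k hk; omega,
    fun H k hk => by rw [H k hk]⟩

end AuxZ2

/-- Multi-qubit ℤ₂ gate transform: every unitary `U_S` on
`H_S = (ℂ²)^{⊗|S|}` transforms under the ℤ₂ frame change `0 → i` as
`U_{0→i} (1 ⊗ U_S) U_{0→i}† = |0⟩⟨0|_0 ⊗ U_S + |1⟩⟨1|_0 ⊗ (X_S U_S X_S)`, tensored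
with the identity on all remaining factors. -/
theorem multiqubit_Z2_gate_transform
    (R : Type*) [Fintype R] [DecidableEq R] (S : Finset R)
    (US : Matrix (↥S → Fin 2) (↥S → Fin 2) ℂ)
    (hUS : USᴴ * US = 1 ∧ US * USᴴ = 1) :
    Uq R * tens3q 1 1 (embedS S US) * (Uq R)ᴴ =
      tens3q (projq 0) 1 (embedS S US) +
        tens3q (projq 1) 1 (embedS S (XS S * US * XS S)) := by
  ext a c
  have hconj : ∀ b', (Uq R)ᴴ b' c =
      if b' = (c.2.1, c.1, fun k => c.2.2 k + c.1) then 1 else 0 := by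
    intro b'
    rw [Matrix.conjTranspose_apply, Uq_apply]
    split_ifs <;> simp
  rw [Matrix.mul_apply]
  simp only [hconj, mul_ite, mul_one, mul_zero, Finset.sum_ite_eq', Finset.mem_univ, if_true]
  rw [Matrix.mul_apply]
  simp only [Uq_apply, ite_mul, one_mul, zero_mul, Finset.sum_ite_eq', Finset.mem_univ, if_true]
  obtain ⟨a1, ai, f⟩ := a
  obtain ⟨c1, ci, h⟩ := c
  fin_cases a1 <;> fin_cases c1 <;>
    simp [tens3q, projq, Matrix.one_apply, Matrix.add_apply, embed_shift] <;>
    split_ifs <;> simp_all <;> ring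
end
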